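/- arXiv:1509.06510 — 5 statements merged into one kernel-verified Lean document; each statement's English description precedes it below -/
import Mathlib

section
/- Let (u,v) be an n-POS in a commutative ring R, with v_t invertible for some index t ∈ {0,...,n}. Let w = (u_0,...,û_t,...,u_n) be the subsequence omitting u_t. Define π : K^•(u;R) → K^•(w;R) by π(e_{i_1}∧...∧e_{i_p}) = e_{i_1}∧...∧e_{i_p} if t ∉ {i_1,...,i_p}, and π(e_{i_1}∧...∧e_{i_p}) = -∑_{k≠t} v_k v_t^{-1} e_{i_1}∧...∧e_{i_{j-1}}∧e_k∧e_{i_{j+1}}∧...∧e_{i_p} if t = i_j. Then π commutes with the Koszul differentials: ∂_w ∘ π = π ∘ ∂_u, i.e. π is a morphism of complexes. -/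
/-!
STATEMENT 1. Let `(u, v)` be an `n`-POS in a commutative ring `R`
(`∑ i, u i * v i = 0`), with `v t` invertible. Let `w` be the subsequence of
`u` omitting `u t`, and let `π : K^•(u;R) → K^•(w;R)` be the map defined by
`π(e_{i_1} ∧ ⋯ ∧ e_{i_p}) = e_{i_1} ∧ ⋯ ∧ e_{i_p}` if `t ∉ {i_1,…,i_p}` and
`π(e_{i_1} ∧ ⋯ ∧ e_{i_p}) = -∑_{k ≠ t} v_k v_t⁻¹ e_{i_1} ∧ ⋯ ∧ e_k ∧ ⋯ ∧ e_{i_p}`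
(with `e_k` in the slot of `e_t = e_{i_j}`) if `t = i_j`.  Then
`∂_w ∘ π = π ∘ ∂_u`.

The exterior algebra on `e_0, …, e_n` is modeled by coefficient functions
`Finset (Fin (n+1)) → R`, and `K^•(w;R)` is the sub-exterior-algebra of
coefficient functions supported on finsets not containing `t`; its Koszul
differential `∂_w` is the contraction along the sequence obtained from `u`
by replacing `u t` with `0`.  Writing basis elements in increasing order
introduces the sign `(-1)^{#\{a ∈ s \ {k} : min t k < a < max t k\}}` when the
slot of `e_t` is filled with `e_k`.
-/

open Finset

private lemma negOne_pow_congr {R : Type*} [CommRing R] {a b : ℕ} (h : a % 2 = b % 2) :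
    (-1 : R) ^ a = (-1 : R) ^ b := by
  rw [neg_one_pow_eq_pow_mod_two, h, ← neg_one_pow_eq_pow_mod_two]

private lemma card_filter_split {α : Type*} [DecidableEq α] (S : Finset α) (p q r : α → Prop)
    [DecidablePred p] [DecidablePred q] [DecidablePred r]
    (h : ∀ a ∈ S, (p a ↔ q a ∨ r a)) (hd : ∀ a, ¬(q a ∧ r a)) :
    (S.filter p).card = (S.filter q).card + (S.filter r).card := by
  rw [← Finset.card_union_of_disjoint (by
    rw [Finset.disjoint_left]
    intro a ha hb
    exact hd a ⟨(Finset.mem_filter.1 ha).2, (Finset.mem_filter.1 hb).2⟩)]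
  congr 1
  ext a
  simp only [Finset.mem_union, Finset.mem_filter]
  constructor
  · rintro ⟨ha, hp⟩
    rcases (h a ha).1 hp with h' | h'
    · exact Or.inl ⟨ha, h'⟩
    · exact Or.inr ⟨ha, h'⟩
  · rintro (⟨ha, h'⟩ | ⟨ha, h'⟩) <;> exact ⟨ha, (h a ha).2 (by tauto)⟩

private lemma card_filter_insert {α : Type*} [DecidableEq α] (X : Finset α) (i : α) (hi : i ∉ X)
    (p : α → Prop) [DecidablePred p] :
    ((insert i X).filter p).card = (X.filter p).card + (if p i then 1 else 0) := by
  rw [Finset.filter_insert]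
  split_ifs with h
  · rw [Finset.card_insert_of_notMem (fun hmem => hi (Finset.mem_filter.1 hmem).1)]
  · rw [add_zero]

/-- Claim A. -/
private lemma signA {R : Type*} [CommRing R] {n : ℕ} {t j : Fin (n + 1)}
    {s : Finset (Fin (n + 1))} (hts : t ∉ s) (hjs : j ∉ s) (hjt : j ≠ t) :
    (-1 : R) ^ (s.filter (· < t)).card
      = (-1 : R) ^ (s.filter (· < j)).card *
        (-1 : R) ^ ((s.filter (fun a => min t j < a ∧ a < max t j)).card) := by
  rw [← pow_add]
  apply negOne_pow_congr
  rcases hjt.lt_or_gt with h | h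
  · -- j < t
    rw [min_eq_right h.le, max_eq_left h.le]
    rw [card_filter_split s (· < t) (· < j) (fun a => j < a ∧ a < t)
      (fun a ha => by
        constructor
        · intro hat
          rcases lt_trichotomy a j with h' | h' | h'
          · exact Or.inl h'
          · exact absurd (h' ▸ ha) hjs
          · exact Or.inr ⟨h', hat⟩
        · rintro (h' | ⟨h1, h2⟩)
          · exact h'.trans h
          · exact h2)
      (fun a ⟨h1, h2, _⟩ => absurd (h1.trans h2) (lt_irrefl a))]
  · -- t < j
    rw [min_eq_left h.le, max_eq_right h.le]
    rw [card_filter_split s (· < j) (· < t) (fun a => t < a ∧ a < j)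
      (fun a ha => by
        constructor
        · intro haj
          rcases lt_trichotomy a t with h' | h' | h'
          · exact Or.inl h'
          · exact absurd (h' ▸ ha) hts
          · exact Or.inr ⟨h', haj⟩
        · rintro (h' | ⟨h1, h2⟩)
          · exact h'.trans h
          · exact h2)
      (fun a ⟨h1, h2, _⟩ => absurd (h1.trans h2) (lt_irrefl a))]
    omega

/-- Claim B. -/
private lemma signB {R : Type*} [CommRing R] {n : ℕ} {t j : Fin (n + 1)}
    {s : Finset (Fin (n + 1))} (hts : t ∉ s) (hjs : j ∈ s) :
    (-1 : R) ^ (((s.erase j).filter (fun a => min t j < a ∧ a < max t j)).card) *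
      (-1 : R) ^ (((insert t (s.erase j)).filter (· < j)).card)
      = -((-1 : R) ^ (s.filter (· < t)).card) := by
  have hjt : j ≠ t := fun h => hts (h ▸ hjs)
  have hte : t ∉ s.erase j := fun h => hts (Finset.mem_of_mem_erase h)
  have hje : j ∉ s.erase j := Finset.notMem_erase j s
  rw [← pow_add, show -((-1 : R) ^ (s.filter (· < t)).card)
      = (-1 : R) ^ ((s.filter (· < t)).card + 1) by rw [pow_succ]; ring]
  apply negOne_pow_congr
  -- rewrite the two "big-set" counts through the base set s.erase j
  have hB : ((insert t (s.erase j)).filter (· < j)).card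
      = ((s.erase j).filter (· < j)).card + (if t < j then 1 else 0) :=
    card_filter_insert _ t hte _
  have hC : (s.filter (· < t)).card
      = ((s.erase j).filter (· < t)).card + (if j < t then 1 else 0) := by
    conv_lhs => rw [← Finset.insert_erase hjs]
    exact card_filter_insert _ j hje _
  rcases hjt.lt_or_gt with h | h
  · -- j < t
    rw [min_eq_right h.le, max_eq_left h.le]
    have key : ((s.erase j).filter (· < t)).card
        = ((s.erase j).filter (· < j)).card
          + ((s.erase j).filter (fun a => j < a ∧ a < t)).card :=
      card_filter_split _ _ _ _
        (fun a ha => by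
          constructor
          · intro hat
            rcases lt_trichotomy a j with h' | h' | h'
            · exact Or.inl h'
            · exact absurd (h' ▸ ha) hje
            · exact Or.inr ⟨h', hat⟩
          · rintro (h' | ⟨h1, h2⟩)
            · exact h'.trans h
            · exact h2)
        (fun a ⟨h1, h2, _⟩ => absurd (h1.trans h2) (lt_irrefl a))
    rw [if_neg (not_lt.2 h.le)] at hB
    rw [if_pos h] at hC
    omega
  · -- t < j
    rw [min_eq_left h.le, max_eq_right h.le]
    have key : ((s.erase j).filter (· < j)).card
        = ((s.erase j).filter (· < t)).card
          + ((s.erase j).filter (fun a => t < a ∧ a < j)).card :=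
      card_filter_split _ _ _ _
        (fun a ha => by
          constructor
          · intro haj
            rcases lt_trichotomy a t with h' | h' | h'
            · exact Or.inl h'
            · exact absurd (h' ▸ ha) hte
            · exact Or.inr ⟨h', haj⟩
          · rintro (h' | ⟨h1, h2⟩)
            · exact h'.trans h
            · exact h2)
        (fun a ⟨h1, h2, _⟩ => absurd (h1.trans h2) (lt_irrefl a))
    rw [if_pos h] at hB
    rw [if_neg (not_lt.2 h.le)] at hC
    omega

/-- Claim C. -/
private lemma signC {R : Type*} [CommRing R] {n : ℕ} {t k i : Fin (n + 1)}
    {s : Finset (Fin (n + 1))} (hts : t ∉ s) (hks : k ∈ s) (his : i ∉ s) (hit : i ≠ t) :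
    (-1 : R) ^ (s.filter (· < i)).card *
      (-1 : R) ^ ((insert i (s.erase k)).filter (fun a => min t k < a ∧ a < max t k)).card
      = (-1 : R) ^ ((s.erase k).filter (fun a => min t k < a ∧ a < max t k)).card *
        (-1 : R) ^ (((insert t (s.erase k)).filter (· < i)).card) := by
  have hik : i ≠ k := fun h => his (h ▸ hks)
  have htk : t ≠ k := fun h => hts (h ▸ hks)
  have hie : i ∉ s.erase k := fun h => his (Finset.mem_of_mem_erase h)
  have hte : t ∉ s.erase k := fun h => hts (Finset.mem_of_mem_erase h)
  rw [← pow_add, ← pow_add]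
  apply negOne_pow_congr
  have h1 : (s.filter (· < i)).card
      = ((s.erase k).filter (· < i)).card + (if k < i then 1 else 0) := by
    conv_lhs => rw [← Finset.insert_erase hks]
    exact card_filter_insert _ k (Finset.notMem_erase k s) _
  have h2 : ((insert i (s.erase k)).filter (fun a => min t k < a ∧ a < max t k)).card
      = ((s.erase k).filter (fun a => min t k < a ∧ a < max t k)).card
        + (if min t k < i ∧ i < max t k then 1 else 0) :=
    card_filter_insert _ i hie _
  have h3 : ((insert t (s.erase k)).filter (· < i)).card
      = ((s.erase k).filter (· < i)).card + (if t < i then 1 else 0) :=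
    card_filter_insert _ t hte _
  rw [h1, h2, h3]
  -- now pure indicator arithmetic
  rcases htk.lt_or_gt with h | h
  · rw [min_eq_left h.le, max_eq_right h.le]
    rcases lt_trichotomy i t with h' | h' | h'
    · have eI : (if t < i ∧ i < k then (1:ℕ) else 0) = 0 :=
        if_neg (fun hc => absurd (h'.trans hc.1) (lt_irrefl i))
      have ek : (if k < i then (1:ℕ) else 0) = 0 := if_neg (not_lt.2 (h'.trans h).le)
      have et : (if t < i then (1:ℕ) else 0) = 0 := if_neg (not_lt.2 h'.le)
      rw [eI, ek, et]
      omega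
    · exact absurd h' hit
    · rcases lt_trichotomy i k with h'' | h'' | h''
      · have eI : (if t < i ∧ i < k then (1:ℕ) else 0) = 1 := if_pos ⟨h', h''⟩
        have ek : (if k < i then (1:ℕ) else 0) = 0 := if_neg (not_lt.2 h''.le)
        have et : (if t < i then (1:ℕ) else 0) = 1 := if_pos h'
        rw [eI, ek, et]
        omega
      · exact absurd h'' hik
      · have eI : (if t < i ∧ i < k then (1:ℕ) else 0) = 0 :=
          if_neg (fun hc => absurd (h''.trans hc.2) (lt_irrefl k))
        have ek : (if k < i then (1:ℕ) else 0) = 1 := if_pos h''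
        have et : (if t < i then (1:ℕ) else 0) = 1 := if_pos h'
        rw [eI, ek, et]
        omega
  · rw [min_eq_right h.le, max_eq_left h.le]
    rcases lt_trichotomy i k with h' | h' | h'
    · have eI : (if k < i ∧ i < t then (1:ℕ) else 0) = 0 :=
        if_neg (fun hc => absurd (h'.trans hc.1) (lt_irrefl i))
      have ek : (if k < i then (1:ℕ) else 0) = 0 := if_neg (not_lt.2 h'.le)
      have et : (if t < i then (1:ℕ) else 0) = 0 := if_neg (not_lt.2 (h'.trans h).le)
      rw [eI, ek, et]
      omega
    · exact absurd h' hik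
    · rcases lt_trichotomy i t with h'' | h'' | h''
      · have eI : (if k < i ∧ i < t then (1:ℕ) else 0) = 1 := if_pos ⟨h', h''⟩
        have ek : (if k < i then (1:ℕ) else 0) = 1 := if_pos h'
        have et : (if t < i then (1:ℕ) else 0) = 0 := if_neg (not_lt.2 h''.le)
        rw [eI, ek, et]
        omega
      · exact absurd h'' hit
      · have eI : (if k < i ∧ i < t then (1:ℕ) else 0) = 0 :=
          if_neg (fun hc => absurd (h''.trans hc.2) (lt_irrefl t))
        have ek : (if k < i then (1:ℕ) else 0) = 1 := if_pos h'
        have et : (if t < i then (1:ℕ) else 0) = 1 := if_pos h''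
        rw [eI, ek, et]
        omega

/-- The Koszul (contraction) differential `∂_u` on coefficient functions. -/
noncomputable def koszulContraction {R : Type*} [CommRing R] {n : ℕ}
    (u : Fin (n + 1) → R) (f : Finset (Fin (n + 1)) → R) :
    Finset (Fin (n + 1)) → R :=
  fun s => ∑ i ∈ sᶜ, (-1 : R) ^ (s.filter (· < i)).card * u i * f (insert i s)

/-- The comparison map `π : K^•(u;R) → K^•(w;R)`, on coefficient functions
(`vt` is the inverse of `v t`). -/
noncomputable def koszulPi {R : Type*} [CommRing R] {n : ℕ}
    (v : Fin (n + 1) → R) (t : Fin (n + 1)) (vt : R)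
    (f : Finset (Fin (n + 1)) → R) : Finset (Fin (n + 1)) → R :=
  fun s =>
    if t ∈ s then 0
    else
      f s - ∑ k ∈ s,
        (-1 : R) ^ (((s.erase k).filter (fun a => min t k < a ∧ a < max t k)).card) *
          (v k * vt) * f (insert t (s.erase k))

theorem stmt1 {R : Type*} [CommRing R] {n : ℕ} (u v : Fin (n + 1) → R)
    (horth : ∑ i, u i * v i = 0) (t : Fin (n + 1)) (vt : R) (hvt : v t * vt = 1)
    (w : Fin (n + 1) → R) (hw : ∀ i, w i = if i = t then 0 else u i)
    (f : Finset (Fin (n + 1)) → R) (s : Finset (Fin (n + 1))) (hts : t ∉ s) :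
    koszulContraction w (koszulPi v t vt f) s = koszulPi v t vt (koszulContraction u f) s := by
  classical
  have htc : t ∈ sᶜ := Finset.mem_compl.2 hts
  -- LHS expansion
  have hL : koszulContraction w (koszulPi v t vt f) s
      = (∑ i ∈ sᶜ.erase t, (-1 : R) ^ (s.filter (· < i)).card * u i * f (insert i s))
        - (∑ i ∈ sᶜ.erase t,
            ((-1 : R) ^ (s.filter (· < i)).card *
              (-1 : R) ^ ((s.filter (fun a => min t i < a ∧ a < max t i)).card)) *
              (u i * (v i * vt))) * f (insert t s)
        - ∑ i ∈ sᶜ.erase t, ∑ k ∈ s,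
            ((-1 : R) ^ (s.filter (· < i)).card *
              (-1 : R) ^ (((insert i (s.erase k)).filter
                (fun a => min t k < a ∧ a < max t k)).card)) *
              (u i * (v k * vt)) * f (insert i (insert t (s.erase k))) := by
    simp only [koszulContraction]
    rw [← Finset.sum_erase_add sᶜ _ htc, hw t, if_pos rfl, mul_zero, zero_mul, add_zero]
    have hterm : ∀ i ∈ sᶜ.erase t,
        (-1 : R) ^ (s.filter (· < i)).card * w i * koszulPi v t vt f (insert i s)
        = ((-1 : R) ^ (s.filter (· < i)).card * u i * f (insert i s)
          - ((-1 : R) ^ (s.filter (· < i)).card *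
              (-1 : R) ^ ((s.filter (fun a => min t i < a ∧ a < max t i)).card)) *
              (u i * (v i * vt)) * f (insert t s))
          - ∑ k ∈ s,
            ((-1 : R) ^ (s.filter (· < i)).card *
              (-1 : R) ^ (((insert i (s.erase k)).filter
                (fun a => min t k < a ∧ a < max t k)).card)) *
              (u i * (v k * vt)) * f (insert i (insert t (s.erase k))) := by
      intro i hi
      obtain ⟨hit, hic⟩ := Finset.mem_erase.1 hi
      have his : i ∉ s := Finset.mem_compl.1 hic
      have htis : t ∉ insert i s := by
        rw [Finset.mem_insert]
        rintro (h | h)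
        · exact hit h.symm
        · exact hts h
      rw [hw i, if_neg hit]
      simp only [koszulPi, if_neg htis]
      rw [Finset.sum_insert his, Finset.erase_insert his]
      have hsum : ∑ k ∈ s,
          (-1 : R) ^ ((((insert i s).erase k).filter
            (fun a => min t k < a ∧ a < max t k)).card) *
            (v k * vt) * f (insert t ((insert i s).erase k))
          = ∑ k ∈ s,
            (-1 : R) ^ (((insert i (s.erase k)).filter
              (fun a => min t k < a ∧ a < max t k)).card) *
              (v k * vt) * f (insert i (insert t (s.erase k))) := by
        refine Finset.sum_congr rfl fun k hk => ?_
        have hik : i ≠ k := fun h => his (h ▸ hk)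
        rw [Finset.erase_insert_of_ne hik, Finset.insert_comm t i]
      rw [hsum, mul_sub, mul_add, sub_add_eq_sub_sub, Finset.mul_sum]
      congr 1
      · congr 1
        ring
      · refine Finset.sum_congr rfl fun k hk => ?_
        ring
    rw [Finset.sum_congr rfl hterm, Finset.sum_sub_distrib, Finset.sum_sub_distrib,
      ← Finset.sum_mul]
  -- RHS expansion
  have hR : koszulPi v t vt (koszulContraction u f) s
      = ((-1 : R) ^ (s.filter (· < t)).card * u t * f (insert t s)
          + ∑ i ∈ sᶜ.erase t, (-1 : R) ^ (s.filter (· < i)).card * u i * f (insert i s))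
        - ((∑ k ∈ s,
            ((-1 : R) ^ (((s.erase k).filter (fun a => min t k < a ∧ a < max t k)).card) *
              (-1 : R) ^ (((insert t (s.erase k)).filter (· < k)).card)) *
              (u k * (v k * vt))) * f (insert t s)
          + ∑ k ∈ s, ∑ i ∈ sᶜ.erase t,
            ((-1 : R) ^ (((s.erase k).filter (fun a => min t k < a ∧ a < max t k)).card) *
              (-1 : R) ^ (((insert t (s.erase k)).filter (· < i)).card)) *
              (u i * (v k * vt)) * f (insert i (insert t (s.erase k)))) := by
    simp only [koszulPi, if_neg hts]
    have e1 : koszulContraction u f s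
        = (-1 : R) ^ (s.filter (· < t)).card * u t * f (insert t s)
          + ∑ i ∈ sᶜ.erase t, (-1 : R) ^ (s.filter (· < i)).card * u i * f (insert i s) := by
      simp only [koszulContraction]
      rw [← Finset.sum_erase_add sᶜ _ htc, add_comm]
    have e2 : ∀ k ∈ s,
        (-1 : R) ^ (((s.erase k).filter (fun a => min t k < a ∧ a < max t k)).card) *
          (v k * vt) * koszulContraction u f (insert t (s.erase k))
        = ((-1 : R) ^ (((s.erase k).filter (fun a => min t k < a ∧ a < max t k)).card) *
            (-1 : R) ^ (((insert t (s.erase k)).filter (· < k)).card)) *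
            (u k * (v k * vt)) * f (insert t s)
          + ∑ i ∈ sᶜ.erase t,
            ((-1 : R) ^ (((s.erase k).filter (fun a => min t k < a ∧ a < max t k)).card) *
              (-1 : R) ^ (((insert t (s.erase k)).filter (· < i)).card)) *
              (u i * (v k * vt)) * f (insert i (insert t (s.erase k))) := by
      intro k hk
      have hkt : k ≠ t := fun h => hts (h ▸ hk)
      have hcompl : (insert t (s.erase k))ᶜ = insert k (sᶜ.erase t) := by
        ext a
        simp only [Finset.mem_compl, Finset.mem_insert, Finset.mem_erase]
        by_cases hak : a = k
        · subst hak
          simp [hkt, hk]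
        · simp only [hak, false_or]
          tauto
      have hknotin : k ∉ sᶜ.erase t :=
        fun h => Finset.mem_compl.1 (Finset.mem_erase.1 h).2 hk
      simp only [koszulContraction]
      rw [hcompl, Finset.sum_insert hknotin]
      rw [Finset.insert_comm k t, Finset.insert_erase hk]
      rw [mul_add, Finset.mul_sum]
      congr 1
      · ring
      · refine Finset.sum_congr rfl fun i hi => ?_
        ring
    rw [e1, Finset.sum_congr rfl e2, Finset.sum_add_distrib, ← Finset.sum_mul]
  rw [hL, hR]
  -- double sums agree
  have hD : ∑ i ∈ sᶜ.erase t, ∑ k ∈ s,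
      ((-1 : R) ^ (s.filter (· < i)).card *
        (-1 : R) ^ (((insert i (s.erase k)).filter
          (fun a => min t k < a ∧ a < max t k)).card)) *
        (u i * (v k * vt)) * f (insert i (insert t (s.erase k)))
      = ∑ k ∈ s, ∑ i ∈ sᶜ.erase t,
        ((-1 : R) ^ (((s.erase k).filter (fun a => min t k < a ∧ a < max t k)).card) *
          (-1 : R) ^ (((insert t (s.erase k)).filter (· < i)).card)) *
          (u i * (v k * vt)) * f (insert i (insert t (s.erase k))) := by
    rw [Finset.sum_comm]
    refine Finset.sum_congr rfl fun k hk => Finset.sum_congr rfl fun i hi => ?_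
    obtain ⟨hit, hic⟩ := Finset.mem_erase.1 hi
    have his : i ∉ s := Finset.mem_compl.1 hic
    rw [signC hts hk his hit]
  rw [hD]
  -- coefficient sums
  have hCL : ∑ i ∈ sᶜ.erase t,
      ((-1 : R) ^ (s.filter (· < i)).card *
        (-1 : R) ^ ((s.filter (fun a => min t i < a ∧ a < max t i)).card)) *
        (u i * (v i * vt))
      = (-1 : R) ^ (s.filter (· < t)).card * vt * ∑ i ∈ sᶜ.erase t, u i * v i := by
    rw [Finset.mul_sum]
    refine Finset.sum_congr rfl fun i hi => ?_
    obtain ⟨hit, hic⟩ := Finset.mem_erase.1 hi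
    have his : i ∉ s := Finset.mem_compl.1 hic
    rw [← signA hts his hit]
    ring
  have hCR : ∑ k ∈ s,
      ((-1 : R) ^ (((s.erase k).filter (fun a => min t k < a ∧ a < max t k)).card) *
        (-1 : R) ^ (((insert t (s.erase k)).filter (· < k)).card)) *
        (u k * (v k * vt))
      = -((-1 : R) ^ (s.filter (· < t)).card * vt * ∑ k ∈ s, u k * v k) := by
    rw [← neg_mul, ← neg_mul, Finset.mul_sum]
    refine Finset.sum_congr rfl fun k hk => ?_
    rw [signB hts hk]
    ring
  rw [hCL, hCR]
  -- the partition identity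
  have hE : sᶜ.erase t = (insert t s)ᶜ := by
    ext a
    simp only [Finset.mem_erase, Finset.mem_compl, Finset.mem_insert]
    tauto
  have hab : (∑ i ∈ sᶜ.erase t, u i * v i) + ((∑ k ∈ s, u k * v k) + u t * v t) = 0 := by
    have h1 : (∑ i ∈ (insert t s)ᶜ, u i * v i) + ∑ i ∈ insert t s, u i * v i = 0 := by
      rw [Finset.sum_compl_add_sum]
      exact horth
    rw [Finset.sum_insert hts] at h1
    rw [hE]
    linear_combination h1
  set T := f (insert t s)
  set E := (-1 : R) ^ (s.filter (· < t)).card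
  set a := ∑ i ∈ sᶜ.erase t, u i * v i
  set b := ∑ k ∈ s, u k * v k
  set S1 := ∑ i ∈ sᶜ.erase t, (-1 : R) ^ (s.filter (· < i)).card * u i * f (insert i s)
  set D := ∑ k ∈ s, ∑ i ∈ sᶜ.erase t,
    ((-1 : R) ^ (((s.erase k).filter (fun a => min t k < a ∧ a < max t k)).card) *
      (-1 : R) ^ (((insert t (s.erase k)).filter (· < i)).card)) *
      (u i * (v k * vt)) * f (insert i (insert t (s.erase k)))
  linear_combination (-(E * vt * T)) * hab + (E * u t * T) * hvt
end

section
/- With the notation of the previous setup (n-POS (u,v) in R, v_t invertible, w the subsequence of u omitting index t, ι : K^•(w;R) → K^•(u;R) the canonical embedding, ∂_v the wedge-with-∑v_je_j map, and π as defined), for every p the sequence 0 → K^{-p+1}(w;R) --(∂_v∘ι)--> K^{-p}(u;R) --π--> K^{-p}(w;R) → 0 is split exact. In particular, a splitting is given by ζ(e_{i_1}∧...∧e_{i_p}) = 0 if t ∉ {i_1,...,i_p} and ζ(e_{i_1}∧...∧e_{i_p}) = (-1)^{j-1} v_t^{-1} e_{i_1}∧...∧ê_{i_j}∧...∧e_{i_p}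 if t = i_j, satisfying ∂_v ι ζ + ι π = id, π ι = id, ζ ∂_v ι = id. -/
/-!
STATEMENT 2. With `(u,v)` an `n`-POS in `R`, `v t` invertible, `w` the
subsequence of `u` omitting index `t`, `ι : K^•(w;R) → K^•(u;R)` the canonical
embedding, `∂_v` the wedge-with-`∑ v_j e_j` map, and `π` as before, for every
`p` the sequence
`0 → K^{-p+1}(w;R) --(∂_v∘ι)--> K^{-p}(u;R) --π--> K^{-p}(w;R) → 0`
is split exact; a splitting is given by `ζ` with
`ζ(e_{i_1} ∧ ⋯ ∧ e_{i_p}) = 0` if `t ∉ {i_1,…,i_p}` and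
`= (-1)^{j-1} v_t⁻¹ e_{i_1} ∧ ⋯ ∧ ê_{i_j} ∧ ⋯ ∧ e_{i_p}` if `t = i_j`,
satisfying `∂_v ι ζ + ι π = id`, `π ι = id`, `ζ ∂_v ι = id`.

The exterior algebra on `e_0, …, e_n` is modeled by coefficient functions
`Finset (Fin (n+1)) → R`; `K^•(w;R)` is the subspace `InW` of functions
vanishing on finsets containing `t`, and `ι` is the inclusion (the identity on
coefficient functions).  All maps preserve the grading by cardinality, so the
degreewise claims are stated on the total spaces.
-/

open Finset

/-- The wedge map `∂_v(ω) = (∑ j, v j • e j) ∧ ω` on coefficient functions. -/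
noncomputable def koszulWedge {R : Type*} [CommRing R] {n : ℕ}
    (v : Fin (n + 1) → R) (f : Finset (Fin (n + 1)) → R) :
    Finset (Fin (n + 1)) → R :=
  fun s => ∑ j ∈ s, (-1 : R) ^ ((s.erase j).filter (· < j)).card * v j * f (s.erase j)

/-- The contracting homotopy `ζ : K^•(u;R) → K^•(w;R)`. -/
noncomputable def koszulZeta {R : Type*} [CommRing R] {n : ℕ}
    (t : Fin (n + 1)) (vt : R)
    (f : Finset (Fin (n + 1)) → R) : Finset (Fin (n + 1)) → R :=
  fun s =>
    if t ∈ s then 0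
    else (-1 : R) ^ (s.filter (· < t)).card * vt * f (insert t s)

/-- Membership in the subcomplex `K^•(w;R) ⊆ K^•(u;R)`. -/
def InW {R : Type*} [CommRing R] {n : ℕ} (t : Fin (n + 1))
    (f : Finset (Fin (n + 1)) → R) : Prop :=
  ∀ s, t ∈ s → f s = 0

private lemma signMul {R : Type*} [CommRing R] {α : Type*} [DecidableEq α]
    (s : Finset α) (p q : α → Prop) [DecidablePred p] [DecidablePred q] :
    ((-1 : R) ^ (s.filter p).card) * (-1) ^ (s.filter q).card =
      (-1) ^ (s.filter (fun a => ¬ (p a ↔ q a))).card := by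
  classical
  induction s using Finset.induction_on with
  | empty => simp
  | @insert a s ha ih =>
    have h1 : a ∉ s.filter p := fun h => ha (Finset.mem_filter.1 h).1
    have h2 : a ∉ s.filter q := fun h => ha (Finset.mem_filter.1 h).1
    have h3 : a ∉ s.filter (fun a => ¬ (p a ↔ q a)) := fun h => ha (Finset.mem_filter.1 h).1
    by_cases hp : p a <;> by_cases hq : q a <;>
      simp [Finset.filter_insert, hp, hq, Finset.card_insert_of_notMem, h1, h2, h3, pow_succ] <;>
      first
        | linear_combination ih
        | linear_combination (-1 : R) * ih

private lemma betweenIff {n : ℕ} (t j a : Fin (n + 1)) (haj : a ≠ j) (hat : a ≠ t) :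
    (¬ ((a < j) ↔ (a < t))) ↔ (min t j < a ∧ a < max t j) := by
  rw [min_lt_iff, lt_max_iff]
  simp only [Fin.lt_def, ← Fin.val_ne_iff] at *
  omega

private lemma sqOne {R : Type*} [CommRing R] (c : ℕ) : ((-1 : R) ^ c) * (-1) ^ c = 1 := by
  rw [← pow_add]; exact Even.neg_one_pow ⟨c, rfl⟩

-- π ∘ ι = id
private lemma piIota {R : Type*} [CommRing R] {n : ℕ} (v : Fin (n + 1) → R)
    (t : Fin (n + 1)) (vt : R) (f : Finset (Fin (n + 1)) → R) (hf : InW t f) :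
    koszulPi v t vt f = f := by
  funext s
  unfold koszulPi
  by_cases ht : t ∈ s
  · simp [ht, hf s ht]
  · simp only [ht, if_false]
    have : ∀ k ∈ s, (-1 : R) ^ (((s.erase k).filter (fun a => min t k < a ∧ a < max t k)).card) *
        (v k * vt) * f (insert t (s.erase k)) = 0 := by
      intro k _
      rw [hf _ (Finset.mem_insert_self t _), mul_zero]
    rw [Finset.sum_eq_zero this, sub_zero]

-- ζ ∘ ∂_v ∘ ι = id
private lemma zetaWedge {R : Type*} [CommRing R] {n : ℕ} (v : Fin (n + 1) → R)
    (t : Fin (n + 1)) (vt : R) (hvt : v t * vt = 1)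
    (f : Finset (Fin (n + 1)) → R) (hf : InW t f) :
    koszulZeta t vt (koszulWedge v f) = f := by
  funext s
  unfold koszulZeta koszulWedge
  by_cases ht : t ∈ s
  · simp [ht, hf s ht]
  · simp only [ht, if_false]
    rw [Finset.sum_eq_single t
      (fun j hj hjt => by
        rw [hf _ (Finset.mem_erase.2 ⟨Ne.symm hjt, Finset.mem_insert_self t s⟩), mul_zero])
      (fun h => absurd (Finset.mem_insert_self t s) h)]
    rw [Finset.erase_insert ht]
    have : (-1 : R) ^ (s.filter (· < t)).card * vt *
        ((-1 : R) ^ (s.filter (· < t)).card * v t * f s) =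
        (((-1 : R) ^ (s.filter (· < t)).card) * (-1) ^ (s.filter (· < t)).card) *
          (v t * vt) * f s := by ring
    rw [this, sqOne, hvt, one_mul, one_mul]

-- homotopy identity
private lemma homotopy {R : Type*} [CommRing R] {n : ℕ} (v : Fin (n + 1) → R)
    (t : Fin (n + 1)) (vt : R) (hvt : v t * vt = 1)
    (f : Finset (Fin (n + 1)) → R) (s : Finset (Fin (n + 1))) :
    koszulWedge v (koszulZeta t vt f) s + koszulPi v t vt f s = f s := by
  classical
  unfold koszulWedge koszulZeta koszulPi
  by_cases ht : t ∈ s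
  · simp only [ht, if_true, add_zero]
    rw [Finset.sum_eq_single t
      (fun j hj hjt => by
        simp [Finset.mem_erase.2 ⟨Ne.symm hjt, ht⟩])
      (fun h => absurd ht h)]
    have hts : t ∉ s.erase t := Finset.notMem_erase t s
    simp only [hts, if_false, Finset.insert_erase ht]
    have : (-1 : R) ^ ((s.erase t).filter (· < t)).card * v t *
        ((-1 : R) ^ ((s.erase t).filter (· < t)).card * vt * f s) =
        (((-1 : R) ^ ((s.erase t).filter (· < t)).card) *
          (-1) ^ ((s.erase t).filter (· < t)).card) * (v t * vt) * f s := by ring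
    rw [this, sqOne, hvt, one_mul, one_mul]
  · simp only [ht, if_false]
    have hsum : ∀ j ∈ s, (-1 : R) ^ (((s.erase j).filter (· < j)).card) * v j *
        (if t ∈ s.erase j then 0
          else (-1 : R) ^ ((s.erase j).filter (· < t)).card * vt * f (insert t (s.erase j))) =
        (-1 : R) ^ (((s.erase j).filter (fun a => min t j < a ∧ a < max t j)).card) *
          (v j * vt) * f (insert t (s.erase j)) := by
      intro j hj
      have htj : t ∉ s.erase j := fun h => ht (Finset.mem_of_mem_erase h)
      rw [if_neg htj]
      have hfc : (s.erase j).filter (fun a => ¬ ((a < j) ↔ (a < t))) =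
          (s.erase j).filter (fun a => min t j < a ∧ a < max t j) := by
        apply Finset.filter_congr
        intro a ha
        have haj : a ≠ j := (Finset.mem_erase.1 ha).1
        have hat : a ≠ t := fun h => ht (h ▸ Finset.mem_of_mem_erase ha)
        first
          | exact betweenIff t j a haj hat
          | exact propext (betweenIff t j a haj hat)
      calc (-1 : R) ^ (((s.erase j).filter (· < j)).card) * v j *
            ((-1 : R) ^ ((s.erase j).filter (· < t)).card * vt * f (insert t (s.erase j)))
          = (((-1 : R) ^ (((s.erase j).filter (· < j)).card)) *
              (-1) ^ ((s.erase j).filter (· < t)).card) * (v j * vt) *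
              f (insert t (s.erase j)) := by ring
        _ = _ := by rw [signMul, hfc]
    rw [Finset.sum_congr rfl hsum]
    ring
theorem stmt2 {R : Type*} [CommRing R] {n : ℕ} (u v : Fin (n + 1) → R)
    (horth : ∑ i, u i * v i = 0) (t : Fin (n + 1)) (vt : R) (hvt : v t * vt = 1) :
    -- the composite `π ∘ ∂_v ∘ ι` vanishes (the sequence is a complex)
    (∀ f : Finset (Fin (n + 1)) → R, InW t f → koszulPi v t vt (koszulWedge v f) = 0) ∧
    -- `π ∘ ι = id`
    (∀ f : Finset (Fin (n + 1)) → R, InW t f → koszulPi v t vt f = f) ∧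
    -- `ζ ∘ ∂_v ∘ ι = id`
    (∀ f : Finset (Fin (n + 1)) → R, InW t f → koszulZeta t vt (koszulWedge v f) = f) ∧
    -- `∂_v ∘ ι ∘ ζ + ι ∘ π = id`
    (∀ f : Finset (Fin (n + 1)) → R, ∀ s,
      koszulWedge v (koszulZeta t vt f) s + koszulPi v t vt f s = f s) ∧
    -- `∂_v ∘ ι` is injective
    (∀ f : Finset (Fin (n + 1)) → R, InW t f → koszulWedge v f = 0 → f = 0) ∧
    -- exactness in the middle
    (∀ f : Finset (Fin (n + 1)) → R, koszulPi v t vt f = 0 →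
      ∃ g, InW t g ∧ f = koszulWedge v g) ∧
    -- `π` is surjective onto `K^•(w;R)`
    (∀ g : Finset (Fin (n + 1)) → R, InW t g → ∃ f, koszulPi v t vt f = g) := by
  have hZinW : ∀ f : Finset (Fin (n + 1)) → R, InW t (koszulZeta t vt f) := by
    intro f s hs
    unfold koszulZeta
    simp [hs]
  refine ⟨?_, fun f hf => piIota v t vt f hf, fun f hf => zetaWedge v t vt hvt f hf,
    fun f s => homotopy v t vt hvt f s, ?_, ?_, ?_⟩
  · -- π ∘ ∂_v ∘ ι = 0
    intro f hf
    funext s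
    have h4 := homotopy v t vt hvt (koszulWedge v f) s
    rw [zetaWedge v t vt hvt f hf] at h4
    have := add_left_cancel (a := koszulWedge v f s)
      (b := koszulPi v t vt (koszulWedge v f) s) (c := 0) (by rw [add_zero]; exact h4)
    simpa using this
  · -- injectivity
    intro f hf h0
    have := zetaWedge v t vt hvt f hf
    rw [h0] at this
    funext s
    rw [← this]
    unfold koszulZeta
    by_cases ht : t ∈ s <;> simp [ht]
  · -- middle exactness
    intro f hpi
    refine ⟨koszulZeta t vt f, hZinW f, ?_⟩
    funext s
    have h4 := homotopy v t vt hvt f s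
    rw [congrFun hpi s] at h4
    simp only [Pi.zero_apply, add_zero] at h4
    exact h4.symm
  · -- surjectivity
    intro g hg
    exact ⟨g, piIota v t vt g hg⟩
end

section
/- Let k be a field of characteristic zero, R = k[x_0,x_1,x_2], d ≥ 6, and F = x_0^d + x_1^{d-1} x_2, so u = (d x_0^{d-1}, (d-1) x_1^{d-2} x_2, x_1^{d-1}). In the localization S_{x_2} of S = R/(F), the element (d-2) x_0^4 x_1^{d-3} x_2^{-1} does not lie in the sum m + (image of ∂_u : S_{x_2}^3 → S_{x_2} restricted to degree-matching elements) for any m ∈ S of the appropriate degree; precisely: there exist no m ∈ S_d and a_1,a_2,a_3 ∈ (S_{x_2})_1 (degree-1 homogeneous elements of the localization) such that m + (d-2) x_0^4 x_1^{d-3} x_2^{-1} = d x_0^{d-1} a_1 + (d-1) x_1^{d-2} x_2 a_2 + x_1^{d-1} a_3. -/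
/-!
STATEMENT 15. Let `k` be a field of characteristic zero, `R = k[x_0,x_1,x_2]`,
`d ≥ 6`, and `F = x_0^d + x_1^{d-1} x_2`, so
`u = (d x_0^{d-1}, (d-1) x_1^{d-2} x_2, x_1^{d-1})`.  In the localization
`S_{x_2}` of `S = R/(F)` there exist no `m ∈ S_d` and degree-one homogeneous
elements `a_1, a_2, a_3 ∈ (S_{x_2})_1` with
`m + (d-2) x_0^4 x_1^{d-3} x_2^{-1}
   = d x_0^{d-1} a_1 + (d-1) x_1^{d-2} x_2 a_2 + x_1^{d-1} a_3`.

Degree-one homogeneous elements of the graded localization `S_{x_2}` are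
exactly the fractions `mk A / x̄_2^N` with `A ∈ R` homogeneous of degree
`N + 1`.
-/

open MvPolynomial

set_option maxHeartbeats 1000000
set_option synthInstance.maxHeartbeats 400000

private lemma coeff_X_pow_mul_zero {k : Type*} [CommRing k]
    (i : Fin 3) (n : ℕ) (p : MvPolynomial (Fin 3) k)
    (μ : Fin 3 →₀ ℕ) (h : μ i < n) : MvPolynomial.coeff μ (X i ^ n * p) = 0 := by
  rw [X_pow_eq_monomial, coeff_monomial_mul', if_neg]
  intro hle
  have := hle i
  simp [Finsupp.single_apply] at this
  omega

theorem stmt15 (k : Type*) [Field k] [CharZero k] (d : ℕ) (hd : 6 ≤ d)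
    (F : MvPolynomial (Fin 3) k) (hF : F = X 0 ^ d + X 1 ^ (d - 1) * X 2) :
    ¬ ∃ (M : MvPolynomial (Fin 3) k) (N : ℕ) (A : Fin 3 → MvPolynomial (Fin 3) k),
        M.IsHomogeneous d ∧ (∀ i, (A i).IsHomogeneous (N + 1)) ∧
        (letI S := MvPolynomial (Fin 3) k ⧸ Ideal.span {F}
         letI mkS := Ideal.Quotient.mk (Ideal.span {F})
         letI T := Localization.Away (mkS (X 2))
         letI x2inv : T := IsLocalization.mk' T 1
            ⟨mkS (X 2), Submonoid.mem_powers _⟩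
         letI a : Fin 3 → T := fun i => IsLocalization.mk' T (mkS (A i))
            ⟨mkS (X 2) ^ N, Submonoid.pow_mem _ (Submonoid.mem_powers _) N⟩
         algebraMap S T (mkS M) +
            algebraMap S T (mkS (C ((d : k) - 2) * (X 0 ^ 4 * X 1 ^ (d - 3)))) * x2inv =
          algebraMap S T (mkS (C (d : k) * X 0 ^ (d - 1))) * a 0 +
            algebraMap S T (mkS (C ((d : k) - 1) * (X 1 ^ (d - 2) * X 2))) * a 1 +
            algebraMap S T (mkS (X 1 ^ (d - 1))) * a 2) := by
  rintro ⟨M, N, A, hM, hA, heq⟩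
  dsimp only at heq
  set S := MvPolynomial (Fin 3) k ⧸ Ideal.span {F} with hS
  set mkS := Ideal.Quotient.mk (Ideal.span {F}) with hmkS
  set T := Localization.Away (mkS (X 2)) with hT
  set x2inv : T := IsLocalization.mk' T 1 ⟨mkS (X 2), Submonoid.mem_powers _⟩ with hx2inv
  set a : Fin 3 → T := fun i => IsLocalization.mk' T (mkS (A i))
      ⟨mkS (X 2) ^ N, Submonoid.pow_mem _ (Submonoid.mem_powers _) N⟩ with ha
  set L : MvPolynomial (Fin 3) k →+* T := (algebraMap S T).comp mkS with hL
  have hLdef : ∀ p : MvPolynomial (Fin 3) k, algebraMap S T (mkS p) = L p := fun p => rfl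
  set z : T := L (X 2) with hz
  have hz1 : x2inv * z = 1 := by
    have h := IsLocalization.mk'_spec T (1 : S) (⟨mkS (X 2), Submonoid.mem_powers _⟩ :
      Submonoid.powers (mkS (X 2)))
    rw [map_one] at h
    exact h
  have hzi : ∀ i, a i * z ^ N = L (A i) := by
    intro i
    have h := IsLocalization.mk'_spec T (mkS (A i)) (⟨mkS (X 2) ^ N,
      Submonoid.pow_mem _ (Submonoid.mem_powers _) N⟩ : Submonoid.powers (mkS (X 2)))
    have h2 : z ^ N = algebraMap S T (mkS (X 2) ^ N) := by
      rw [map_pow]; rfl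
    rw [h2]
    exact h
  -- key equality in T of images of polynomials
  set c2 : k := (d : k) - 2 with hc2
  set P1 : MvPolynomial (Fin 3) k :=
    X 2 ^ (N + 1) * M + X 2 ^ N * (C c2 * (X 0 ^ 4 * X 1 ^ (d - 3))) with hP1
  set P2 : MvPolynomial (Fin 3) k :=
    X 2 * (C (d : k) * X 0 ^ (d - 1) * A 0 + C ((d : k) - 1) * (X 1 ^ (d - 2) * X 2) * A 1 +
      X 1 ^ (d - 1) * A 2) with hP2
  have heq' : L M + L (C c2 * (X 0 ^ 4 * X 1 ^ (d - 3))) * x2inv =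
      L (C (d : k) * X 0 ^ (d - 1)) * a 0 +
      L (C ((d : k) - 1) * (X 1 ^ (d - 2) * X 2)) * a 1 +
      L (X 1 ^ (d - 1)) * a 2 := heq
  have key : L P1 = L P2 := by
    have h1 : L P1 = z ^ N * (z * (L M + L (C c2 * (X 0 ^ 4 * X 1 ^ (d - 3))) * x2inv)) := by
      simp only [hP1, map_add, map_mul, map_pow, ← hz]
      linear_combination (-(z ^ N * (L (C c2) * (L (X 0) ^ 4 * L (X 1) ^ (d - 3))))) * hz1
    have h2 : L P2 = z ^ N * (z * (L (C (d : k) * X 0 ^ (d - 1)) * a 0 +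
        L (C ((d : k) - 1) * (X 1 ^ (d - 2) * X 2)) * a 1 + L (X 1 ^ (d - 1)) * a 2)) := by
      simp only [hP2, map_add, map_mul, map_pow, ← hz]
      linear_combination (z * (L (C (d : k)) * L (X 0) ^ (d - 1))) * (hzi 0).symm +
        (z * (L (C ((d : k) - 1)) * (L (X 1) ^ (d - 2) * L (X 2)))) * (hzi 1).symm +
        (z * L (X 1) ^ (d - 1)) * (hzi 2).symm
    rw [h1, heq', ← h2]
  -- pull back to S, then to an ideal membership in R
  obtain ⟨⟨c, hc⟩, hcc⟩ := (IsLocalization.eq_iff_exists (Submonoid.powers (mkS (X 2))) T).mp key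
  obtain ⟨j, rfl⟩ := hc
  have hmem : X 2 ^ j * P1 - X 2 ^ j * P2 ∈ Ideal.span {F} := by
    rw [← Ideal.Quotient.eq_zero_iff_mem]
    have : mkS (X 2 ^ j * P1 - X 2 ^ j * P2) = 0 := by
      rw [map_sub, map_mul, map_mul, map_pow, sub_eq_zero]
      exact hcc
    exact this
  obtain ⟨G, hG⟩ := Ideal.mem_span_singleton'.mp hmem
  -- rearranged polynomial identity
  have E : X 2 ^ (N + j + 1) * M + C c2 * (X 2 ^ (N + j) * (X 0 ^ 4 * X 1 ^ (d - 3))) =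
      X 0 ^ (d - 1) * (C (d : k) * (X 2 ^ (j + 1) * A 0)) +
      X 1 ^ (d - 2) * (C ((d : k) - 1) * (X 2 ^ (j + 2) * A 1)) +
      X 1 ^ (d - 1) * (X 2 ^ (j + 1) * A 2) +
      (X 0 ^ d * G + X 1 ^ (d - 1) * (X 2 * G)) := by
    rw [hP1, hP2, hF] at hG
    linear_combination -hG
  -- extract the coefficient of x0^4 x1^(d-3) x2^(N+j)
  set μ : Fin 3 →₀ ℕ := Finsupp.single 0 4 + Finsupp.single 1 (d - 3) +
    Finsupp.single 2 (N + j) with hμ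
  have hμ0 : μ 0 = 4 := by simp [hμ, Finsupp.single_apply]
  have hμ1 : μ 1 = d - 3 := by simp [hμ, Finsupp.single_apply]
  have hμ2 : μ 2 = N + j := by simp [hμ, Finsupp.single_apply]
  have hmon : X 2 ^ (N + j) * (X 0 ^ 4 * X 1 ^ (d - 3)) =
      (monomial μ (1 : k)) := by
    rw [X_pow_eq_monomial, X_pow_eq_monomial, X_pow_eq_monomial, monomial_mul, monomial_mul]
    rw [hμ]
    congr 1
    · abel_nf
    · ring
  have hco := congrArg (MvPolynomial.coeff μ) E
  rw [coeff_add, coeff_add, coeff_add, coeff_add, coeff_add, coeff_C_mul, hmon] at hco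
  rw [coeff_X_pow_mul_zero 2 (N + j + 1) M μ (by omega),
      coeff_X_pow_mul_zero 0 (d - 1) _ μ (by omega),
      coeff_X_pow_mul_zero 1 (d - 2) _ μ (by omega),
      coeff_X_pow_mul_zero 1 (d - 1) _ μ (by omega),
      coeff_X_pow_mul_zero 0 d G μ (by omega),
      coeff_X_pow_mul_zero 1 (d - 1) _ μ (by omega),
      coeff_monomial] at hco
  have hco2 : (d : k) - 2 = 0 := by simpa [hc2] using hco
  have hd2 : (d : k) = 2 := sub_eq_zero.mp hco2
  have : d = 2 := by exact_mod_cast hd2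
  omega
end

section
/- Let k be a field of characteristic zero, R = k[x_0,x_1,x_2,x_3], F = x_0^4 + x_1^4 + x_2^4 - 4 x_2 x_3^3 + 3 x_3^4, with u = (4x_0^3, 4x_1^3, 4(x_2^3 - x_3^3), -12 x_3^2(x_2 - x_3)). Then dim_k ( R_4 / ∑_{i,j=0}^3 k · x_i · u_j ) = 19, and the kernel of the Koszul differential ∂_u : R^6_2 → R^4_5 given by (a_{01},a_{02},a_{03},a_{12},a_{13},a_{23}) ↦ (−a_{01}u_1−a_{02}u_2−a_{03}u_3, a_{01}u_0−a_{12}u_2−a_{13}u_3, a_{02}u_0+a_{12}u_1−a_{23}u_3, a_{03}u_0+a_{13}u_1+a_{23}u_2) is zero. -/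
/-!
Both claims come from one observation about syzygies `∑ b_j u_j = 0`. Since `u_0 = 4 x_0^3`
while `u_1, u_2, u_3` do not involve `x_0`, comparing `x_0`-degrees shows `b_0 = 0` as soon as all
`b_j` have `x_0`-degree `< 3`; in the same way `x_1` kills `b_1`, and for linear `b_j` the
`x_2`-degree kills `b_2`, leaving `b_3 u_3 = 0`. For linear coefficients this makes the sixteen
products `x_i u_j` independent, so they span a 16-dimensional subspace of the 35-dimensional `R_4`.
For a Koszul cycle of quadrics three of the four component equations peel off the `a_{ij}` one at a
time in the same way.
-/

open MvPolynomial Module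

theorem Submodule.finrank_quotient_comap_subtype {K V : Type*} [DivisionRing K] [AddCommGroup V]
    [Module K V] {U W : Submodule K V} [Module.Finite K U] (h : W ≤ U) :
    finrank K (U ⧸ W.comap U.subtype) = finrank K U - finrank K W := by
  rw [Submodule.finrank_quotient, (Submodule.comapSubtypeEquivOfLe h).finrank_eq]

namespace MvPolynomial

variable {σ R : Type*}

theorem pderiv_ofNat [CommSemiring R] (i : σ) (n : ℕ) [n.AtLeastTwo] :
    pderiv i (ofNat(n) : MvPolynomial σ R) = 0 :=
  (pderiv i).map_natCast n

theorem IsHomogeneous.degreeOf_le [CommSemiring R] {φ : MvPolynomial σ R} {n : ℕ}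
    (h : φ.IsHomogeneous n) (i : σ) : φ.degreeOf i ≤ n :=
  (degreeOf_le_totalDegree φ i).trans h.totalDegree_le

theorem eq_zero_of_mul_C_mul_X_pow_eq [CommRing R] [IsDomain R] {p q : MvPolynomial σ R} {c : R}
    {i : σ} {n : ℕ} (hc : c ≠ 0) (h : p * (C c * X i ^ n) = q) (hq : q.degreeOf i < n) :
    p = 0 := by
  by_contra hp
  have := degreeOf_mul_X_self_pow_eq_add_of_ne_zero i n (mul_ne_zero hp (C_ne_zero.mpr hc))
  rw [mul_assoc, h] at this
  omega

instance [Finite σ] [CommSemiring R] (n : ℕ) : Module.Finite R (homogeneousSubmodule σ R n) :=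
  Module.Finite.iff_fg.mpr (homogeneousSubmodule_fg σ R n)

theorem finrank_homogeneousSubmodule [Fintype σ] [CommRing R] [StrongRankCondition R] (n : ℕ) :
    finrank R (homogeneousSubmodule σ R n) = (Fintype.card σ).multichoose n := by
  classical
  have hdeg : {d : σ →₀ ℕ | d.degree = n} =
      ↑(Finset.univ.finsuppAntidiag n : Finset (σ →₀ ℕ)) := by
    ext d
    simp [Finsupp.degree_eq_sum]
  rw [homogeneousSubmodule_eq_finsupp_supported, hdeg]
  refine (finrank_eq_card_basis (basisRestrictSupport R _)).trans ?_
  simp only [Finset.coe_sort_coe, Fintype.card_coe]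
  rw [Finset.card_finsuppAntidiag_nat_eq_multichoose, Finset.card_univ]

theorem linearIndependent_X_mul {ι : Type*} [Fintype σ] [Fintype ι] [CommRing R]
    (u : ι → MvPolynomial σ R)
    (hu : ∀ l : ι → MvPolynomial σ R,
      (∀ j, (l j).IsHomogeneous 1) → ∑ j, l j * u j = 0 → l = 0) :
    LinearIndependent R (fun p : σ × ι => X p.1 * u p.2) := by
  rw [Fintype.linearIndependent_iff]
  intro g hg
  have hl := hu (fun j => ∑ i, g (i, j) • X i)
    (fun j => (homogeneousSubmodule σ R 1).sum_mem fun i _ =>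
      Submodule.smul_mem _ _ (isHomogeneous_X R i)) ?_
  · rintro ⟨i, j⟩
    exact Fintype.linearIndependent_iff.mp (linearIndependent_X _ _) _ (congrFun hl j) i
  · rw [← hg, Fintype.sum_prod_type, Finset.sum_comm]
    simp [Finset.sum_mul]

end MvPolynomial

noncomputable def quartic (k : Type*) [CommRing k] : MvPolynomial (Fin 4) k :=
  X 0 ^ 4 + X 1 ^ 4 + X 2 ^ 4 - 4 * X 2 * X 3 ^ 3 + 3 * X 3 ^ 4

section Quartic

variable {k : Type*} [CommRing k]

theorem pderiv_zero_quartic : pderiv 0 (quartic k) = C 4 * X 0 ^ 3 := by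
  simp [quartic, pderiv_X, pderiv_ofNat, map_ofNat]

theorem pderiv_one_quartic : pderiv 1 (quartic k) = C 4 * X 1 ^ 3 := by
  simp [quartic, pderiv_X, pderiv_ofNat, map_ofNat]

theorem pderiv_two_quartic : pderiv 2 (quartic k) = C 4 * (X 2 ^ 3 - X 3 ^ 3) := by
  simp [quartic, pderiv_X, pderiv_ofNat, map_ofNat]
  ring

theorem pderiv_three_quartic : pderiv 3 (quartic k) = C 12 * (X 3 ^ 3 - X 2 * X 3 ^ 2) := by
  simp [quartic, pderiv_X, pderiv_ofNat, map_ofNat]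
  ring

theorem isHomogeneous_quartic : (quartic k).IsHomogeneous 4 := by
  rw [quartic, ← map_ofNat C 4, ← map_ofNat C 3]
  refine ((((isHomogeneous_X_pow 0 4).add (isHomogeneous_X_pow 1 4)).add
    (isHomogeneous_X_pow 2 4)).sub ?_).add (isHomogeneous_C_mul_X_pow _ 3 4)
  exact (isHomogeneous_C_mul_X _ 2).mul (isHomogeneous_X_pow 3 3)

theorem degreeOf_zero_pderiv_quartic {j : Fin 4} (hj : j ≠ 0) :
    degreeOf 0 (pderiv j (quartic k)) = 0 := by
  obtain rfl | rfl | rfl : j = 1 ∨ j = 2 ∨ j = 3 := by omega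
  all_goals
    simp only [pderiv_one_quartic, pderiv_two_quartic, pderiv_three_quartic]
    refine Nat.le_zero.1 ((degreeOf_C_mul_le _ _ _).trans ?_)
    grind [degreeOf_sub_le, degreeOf_mul_le, degreeOf_X_pow_of_ne, degreeOf_X_of_ne]

theorem degreeOf_one_pderiv_quartic {j : Fin 4} (hj : 2 ≤ j) :
    degreeOf 1 (pderiv j (quartic k)) = 0 := by
  obtain rfl | rfl : j = 2 ∨ j = 3 := by omega
  all_goals
    simp only [pderiv_two_quartic, pderiv_three_quartic]
    refine Nat.le_zero.1 ((degreeOf_C_mul_le _ _ _).trans ?_)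
    grind [degreeOf_sub_le, degreeOf_mul_le, degreeOf_X_pow_of_ne, degreeOf_X_of_ne]

theorem degreeOf_two_pderiv_three_quartic_le [Nontrivial k] :
    degreeOf 2 (pderiv 3 (quartic k)) ≤ 1 := by
  rw [pderiv_three_quartic]
  refine (degreeOf_C_mul_le _ _ _).trans ?_
  grind [degreeOf_sub_le, degreeOf_mul_le, degreeOf_X_pow_of_ne, degreeOf_X_of_ne, degreeOf_X_self]

variable [CharZero k]

theorem pderiv_three_quartic_ne_zero : pderiv 3 (quartic k) ≠ 0 := by
  intro h
  simpa [pderiv_three_quartic] using congrArg (eval ![0, 0, 0, 1]) h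

variable [IsDomain k]

theorem eq_zero_of_sum_mul_pderiv_quartic_eq_zero (l : Fin 4 → MvPolynomial (Fin 4) k)
    (hl : ∀ j, (l j).IsHomogeneous 1) (h : ∑ j, l j * pderiv j (quartic k) = 0) : l = 0 := by
  have hdeg : ∀ j i, degreeOf i (l j) ≤ 1 := fun j => (hl j).degreeOf_le
  rw [Fin.sum_univ_four] at h
  have hl0 : l 0 = 0 := by
    refine eq_zero_of_mul_C_mul_X_pow_eq (by norm_num : (4 : k) ≠ 0)
      (q := -(l 1 * pderiv 1 (quartic k) + l 2 * pderiv 2 (quartic k) + l 3 * pderiv 3 (quartic k)))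
      (by rw [← pderiv_zero_quartic]; linear_combination h) ?_
    grind [degreeOf_add_le, degreeOf_mul_le, degreeOf_neg, degreeOf_zero_pderiv_quartic]
  have hl1 : l 1 = 0 := by
    refine eq_zero_of_mul_C_mul_X_pow_eq (by norm_num : (4 : k) ≠ 0)
      (q := -(l 2 * pderiv 2 (quartic k) + l 3 * pderiv 3 (quartic k)))
      (by rw [← pderiv_one_quartic]; linear_combination h - hl0 * pderiv 0 (quartic k)) ?_
    grind [degreeOf_add_le, degreeOf_mul_le, degreeOf_neg, degreeOf_one_pderiv_quartic]
  have hl2 : l 2 = 0 := by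
    refine eq_zero_of_mul_C_mul_X_pow_eq (by norm_num : (4 : k) ≠ 0)
      (i := 2) (n := 3) (q := l 2 * (C 4 * X 3 ^ 3) - l 3 * pderiv 3 (quartic k)) ?_ ?_
    · rw [pderiv_two_quartic] at h
      linear_combination h - hl0 * pderiv 0 (quartic k) - hl1 * pderiv 1 (quartic k)
    · have := degreeOf_two_pderiv_three_quartic_le (k := k)
      grind [degreeOf_sub_le, degreeOf_mul_le, degreeOf_C_mul_le, degreeOf_X_pow_of_ne]
  have hl3 : l 3 * pderiv 3 (quartic k) = 0 := by
    simpa [hl0, hl1, hl2] using h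
  ext1 j
  fin_cases j
  exacts [hl0, hl1, hl2, (mul_eq_zero.mp hl3).resolve_right pderiv_three_quartic_ne_zero]

theorem eq_zero_of_koszul_pderiv_quartic (a : Fin 6 → MvPolynomial (Fin 4) k)
    (ha : ∀ r, a r ∈ homogeneousSubmodule (Fin 4) k 2)
    (h2 : a 0 * pderiv 0 (quartic k) - a 3 * pderiv 2 (quartic k) -
      a 4 * pderiv 3 (quartic k) = 0)
    (h3 : a 1 * pderiv 0 (quartic k) + a 3 * pderiv 1 (quartic k) -
      a 5 * pderiv 3 (quartic k) = 0)
    (h4 : a 2 * pderiv 0 (quartic k) + a 4 * pderiv 1 (quartic k) +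
      a 5 * pderiv 2 (quartic k) = 0) :
    a = 0 := by
  have hdeg : ∀ r i, degreeOf i (a r) ≤ 2 := fun r => (ha r).degreeOf_le
  have ha1 : a 1 = 0 := by
    refine eq_zero_of_mul_C_mul_X_pow_eq (by norm_num : (4 : k) ≠ 0)
      (q := a 5 * pderiv 3 (quartic k) - a 3 * pderiv 1 (quartic k))
      (by rw [← pderiv_zero_quartic]; linear_combination h3) ?_
    grind [degreeOf_sub_le, degreeOf_mul_le, degreeOf_zero_pderiv_quartic]
  have ha3 : a 3 = 0 := by
    refine eq_zero_of_mul_C_mul_X_pow_eq (by norm_num : (4 : k) ≠ 0)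
      (q := a 5 * pderiv 3 (quartic k))
      (by rw [← pderiv_one_quartic]; linear_combination h3 - ha1 * pderiv 0 (quartic k)) ?_
    grind [degreeOf_mul_le, degreeOf_one_pderiv_quartic]
  have ha0 : a 0 = 0 := by
    refine eq_zero_of_mul_C_mul_X_pow_eq (by norm_num : (4 : k) ≠ 0)
      (q := a 4 * pderiv 3 (quartic k))
      (by rw [← pderiv_zero_quartic]; linear_combination h2 + ha3 * pderiv 2 (quartic k)) ?_
    grind [degreeOf_mul_le, degreeOf_zero_pderiv_quartic]
  have hu3 := pderiv_three_quartic_ne_zero (k := k)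
  have ha5 : a 5 = 0 := (mul_eq_zero.mp (by simpa [ha1, ha3] using h3)).resolve_right hu3
  have ha4 : a 4 = 0 := (mul_eq_zero.mp (by simpa [ha0, ha3] using h2)).resolve_right hu3
  have ha2 : a 2 = 0 := by
    refine eq_zero_of_mul_C_mul_X_pow_eq (by norm_num : (4 : k) ≠ 0) (i := 0) (n := 3) (q := 0) ?_
      (by simp)
    simpa [ha4, ha5, pderiv_zero_quartic] using h4
  ext1 r
  fin_cases r
  exacts [ha0, ha1, ha2, ha3, ha4, ha5]

end Quartic

theorem stmt16 (k : Type*) [Field k] [CharZero k]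
    (F : MvPolynomial (Fin 4) k)
    (hF : F = X 0 ^ 4 + X 1 ^ 4 + X 2 ^ 4 - 4 * X 2 * X 3 ^ 3 + 3 * X 3 ^ 4)
    (u : Fin 4 → MvPolynomial (Fin 4) k) (hu : ∀ j, u j = pderiv j F)
    (W : Submodule k (MvPolynomial (Fin 4) k))
    (hW : W = Submodule.span k
      {p : MvPolynomial (Fin 4) k | ∃ i j : Fin 4, p = X i * u j}) :
    finrank k
      ((homogeneousSubmodule (Fin 4) k 4) ⧸
        W.comap (homogeneousSubmodule (Fin 4) k 4).subtype) = 19 ∧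
    ∀ a : Fin 6 → MvPolynomial (Fin 4) k,
      (∀ r, a r ∈ homogeneousSubmodule (Fin 4) k 2) →
      (-(a 0 * u 1) - a 1 * u 2 - a 2 * u 3 = 0) →
      (a 0 * u 0 - a 3 * u 2 - a 4 * u 3 = 0) →
      (a 1 * u 0 + a 3 * u 1 - a 5 * u 3 = 0) →
      (a 2 * u 0 + a 4 * u 1 + a 5 * u 2 = 0) →
      a = 0 := by
  subst hF hW
  obtain rfl : u = fun j => pderiv j (quartic k) := funext hu
  refine ⟨?_, fun a ha _ h2 h3 h4 => eq_zero_of_koszul_pderiv_quartic a ha h2 h3 h4⟩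
  have hgen : {p | ∃ i j : Fin 4, p = X i * pderiv j (quartic k)} =
      Set.range fun p : Fin 4 × Fin 4 => X p.1 * pderiv p.2 (quartic k) := by
    ext
    simp [eq_comm]
  have hle : Submodule.span k {p | ∃ i j : Fin 4, p = X i * pderiv j (quartic k)} ≤
      homogeneousSubmodule (Fin 4) k 4 := by
    refine Submodule.span_le.mpr ?_
    rintro _ ⟨i, j, rfl⟩
    exact (isHomogeneous_X k i).mul (isHomogeneous_quartic.pderiv (i := j))
  rw [Submodule.finrank_quotient_comap_subtype hle, finrank_homogeneousSubmodule, hgen,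
    finrank_span_eq_card (linearIndependent_X_mul _ eq_zero_of_sum_mul_pderiv_quartic_eq_zero)]
  simp [Nat.multichoose_eq, Nat.choose]
end

section
/- Let k be a field of characteristic zero, R = k[x_0,x_1,x_2,x_3], F = x_0^4 + (x_1^2 + x_2^2)^2, so u = (∂F/∂x_i) = (4x_0^3, 4x_1(x_1^2+x_2^2), 4x_2(x_1^2+x_2^2), 0). Then the kernel of the Koszul differential ∂_u : R^6_2 → R^4_5 (on degree-2 coefficient tuples indexed by pairs {i,j}) equals { (0,0,0,0, x_2 u, -x_1 u) : u ∈ R_1 }, a 4-dimensional space. -/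
/-!
Write `q = x₁² + x₂²`, so that `∇F = 4 (x₀³, x₁ q, x₂ q, 0)`; the coordinates `a 0, …, a 5` sit
at the pairs `(01), (02), (03), (12), (13), (23)`. The prime `x₀` divides neither `q` nor `x₂ q`,
so the equations force `x₀³ ∣ a₁₂` and `x₀³ ∣ x₁ a₁₃ + x₂ a₂₃`. A quadric divisible by `x₀³`
vanishes, and so does a cubic divisible by `x₀³` without an `x₀³` term; hence `a₁₂ = 0` and
`x₁ a₁₃ + x₂ a₂₃ = 0`, after which `a₀₁ = a₀₂ = a₀₃ = 0`, and primality of `x₂` gives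
`a₁₃ = x₂ w`, `a₂₃ = -x₁ w`.
-/

open MvPolynomial Module

theorem Finsupp.eq_single_of_degree_le {σ : Type*} {d : σ →₀ ℕ} {i : σ} (h : d.degree ≤ d i) :
    d = single i (d i) := by
  have hsplit := single_add_erase i d
  have herase : (d.erase i).degree = 0 := by
    have := congrArg degree hsplit
    rw [map_add, degree_single] at this
    omega
  rw [degree_eq_zero_iff] at herase
  rwa [herase, add_zero, eq_comm] at hsplit

namespace MvPolynomial

variable {σ R : Type*} [CommSemiring R] {p : MvPolynomial σ R} {i : σ} {m n : ℕ}

theorem coeff_eq_zero_of_X_pow_dvd (h : X i ^ m ∣ p) {d : σ →₀ ℕ} (hd : d i < m) :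
    coeff d p = 0 := by
  obtain ⟨t, rfl⟩ := h
  rw [X_pow_eq_monomial, coeff_monomial_mul', if_neg]
  exact fun hle => hd.not_ge (by simpa using hle i)

theorem not_X_dvd_of_eval_ne_zero {f : σ → R} (hf : f i = 0) (hp : eval f p ≠ 0) :
    ¬ X i ∣ p := by
  rintro ⟨t, rfl⟩
  simp [hf] at hp

namespace IsHomogeneous

theorem eq_zero_of_X_pow_dvd (hp : p.IsHomogeneous n) (h : X i ^ m ∣ p) (hnm : n < m) :
    p = 0 := by
  ext d
  by_cases hd : d.degree = n
  · exact coeff_eq_zero_of_X_pow_dvd h ((d.le_degree i).trans_lt (hd ▸ hnm))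
  · exact hp.coeff_eq_zero hd

theorem eq_zero_of_X_pow_dvd_of_coeff_eq_zero (hp : p.IsHomogeneous n) (h : X i ^ n ∣ p)
    (h0 : coeff (Finsupp.single i n) p = 0) : p = 0 := by
  ext d
  by_cases hd : d.degree = n
  · rcases lt_or_ge (d i) n with hlt | hle
    · exact coeff_eq_zero_of_X_pow_dvd h hlt
    · have hdi : d i = n := le_antisymm (hd ▸ d.le_degree i) hle
      rw [Finsupp.eq_single_of_degree_le (hd.trans_le hle), hdi, h0, coeff_zero]
  · exact hp.coeff_eq_zero hd

theorem of_X_mul (h : (X i * p).IsHomogeneous (n + 1)) : p.IsHomogeneous n := by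
  intro d hd
  have := h (d := Finsupp.single i 1 + d) (by rwa [coeff_X_mul])
  rw [map_add, Finsupp.weight_single, Pi.one_apply, smul_eq_mul, mul_one] at this
  omega

end IsHomogeneous

end MvPolynomial

section

variable {k : Type*} [CommRing k] [IsDomain k] [CharZero k]

theorem exists_eq_of_koszul_cycle (a : Fin 6 → MvPolynomial (Fin 4) k)
    (ha : ∀ r, (a r).IsHomogeneous 2)
    (h₁ : a 0 * X 0 ^ 3 = a 3 * (X 2 * (X 1 ^ 2 + X 2 ^ 2)))
    (h₂ : a 1 * X 0 ^ 3 = -(a 3 * (X 1 * (X 1 ^ 2 + X 2 ^ 2))))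
    (h₃ : a 2 * X 0 ^ 3 = -((a 4 * X 1 + a 5 * X 2) * (X 1 ^ 2 + X 2 ^ 2))) :
    ∃ w : MvPolynomial (Fin 4) k, w.IsHomogeneous 1 ∧ a = ![0, 0, 0, 0, X 2 * w, -(X 1 * w)] := by
  have hX0 : Prime (X 0 : MvPolynomial (Fin 4) k) := X_prime
  have hq : ¬ X 0 ∣ (X 1 ^ 2 + X 2 ^ 2 : MvPolynomial (Fin 4) k) :=
    not_X_dvd_of_eval_ne_zero (f := fun j => if j = 0 then 0 else 1) rfl (by simp)
  have hq2 : ¬ X 0 ∣ (X 2 * (X 1 ^ 2 + X 2 ^ 2) : MvPolynomial (Fin 4) k) :=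
    not_X_dvd_of_eval_ne_zero (f := fun j => if j = 0 then 0 else 1) rfl (by simp)
  have hcancel (b : MvPolynomial (Fin 4) k) (hb : b * X 0 ^ 3 = 0) : b = 0 :=
    (mul_eq_zero.1 hb).resolve_right (pow_ne_zero _ (X_ne_zero 0))
  have ha3 : a 3 = 0 :=
    (ha 3).eq_zero_of_X_pow_dvd
      (hX0.pow_dvd_of_dvd_mul_right 3 hq2 ⟨a 0, by rw [← h₁, mul_comm]⟩) (by norm_num)
  have ha0 : a 0 = 0 := hcancel _ (by rw [h₁, ha3, zero_mul])
  have ha1 : a 1 = 0 := hcancel _ (by rw [h₂, ha3, zero_mul, neg_zero])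
  have hs : a 4 * X 1 + a 5 * X 2 = 0 := by
    refine IsHomogeneous.eq_zero_of_X_pow_dvd_of_coeff_eq_zero (i := 0)
      (((ha 4).mul (isHomogeneous_X k 1)).add ((ha 5).mul (isHomogeneous_X k 2)))
      (hX0.pow_dvd_of_dvd_mul_right 3 hq ⟨-a 2, by linear_combination h₃⟩) ?_
    simp [coeff_mul_X']
  have ha2 : a 2 = 0 := hcancel _ (by rw [h₃, hs, zero_mul, neg_zero])
  have hX2 : X 2 ∣ a 4 * X 1 := ⟨-a 5, by linear_combination hs⟩
  obtain ⟨w, hw⟩ : X 2 ∣ a 4 :=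
    (X_prime.dvd_or_dvd hX2).resolve_right (by rw [X_dvd_X]; decide)
  have ha5 : a 5 = -(X 1 * w) :=
    mul_left_cancel₀ (X_ne_zero 2) (by linear_combination hs - X 1 * hw)
  refine ⟨w, (hw ▸ ha 4).of_X_mul, ?_⟩
  funext r
  fin_cases r
  exacts [ha0, ha1, ha2, ha3, hw, ha5]

end

theorem stmt17 (k : Type*) [Field k] [CharZero k]
    (F : MvPolynomial (Fin 4) k)
    (hF : F = X 0 ^ 4 + (X 1 ^ 2 + X 2 ^ 2) ^ 2)
    (u : Fin 4 → MvPolynomial (Fin 4) k) (hu : ∀ j, u j = pderiv j F) :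
    (∀ a : Fin 6 → MvPolynomial (Fin 4) k,
      (∀ r, a r ∈ homogeneousSubmodule (Fin 4) k 2) →
      (((-(a 0 * u 1) - a 1 * u 2 - a 2 * u 3 = 0) ∧
        (a 0 * u 0 - a 3 * u 2 - a 4 * u 3 = 0) ∧
        (a 1 * u 0 + a 3 * u 1 - a 5 * u 3 = 0) ∧
        (a 2 * u 0 + a 4 * u 1 + a 5 * u 2 = 0)) ↔
       ∃ w : MvPolynomial (Fin 4) k, w ∈ homogeneousSubmodule (Fin 4) k 1 ∧
         a = ![0, 0, 0, 0, X 2 * w, -(X 1 * w)])) ∧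
    -- the kernel is `4`-dimensional, like `R_1`
    finrank k (homogeneousSubmodule (Fin 4) k 1) = 4 := by
  obtain ⟨hu0, hu1, hu2, hu3⟩ : u 0 = 4 * X 0 ^ 3 ∧ u 1 = 4 * X 1 * (X 1 ^ 2 + X 2 ^ 2) ∧
      u 2 = 4 * X 2 * (X 1 ^ 2 + X 2 ^ 2) ∧ u 3 = 0 := by
    refine ⟨?_, ?_, ?_, ?_⟩ <;> simp [hu, hF, pderiv_X] <;> ring
  simp only [hu0, hu1, hu2, hu3, mem_homogeneousSubmodule]
  have h4 : (4 : MvPolynomial (Fin 4) k) ≠ 0 := by norm_num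
  refine ⟨fun a ha => ⟨fun ⟨_, e₁, e₂, e₃⟩ => ?_, ?_⟩, ?_⟩
  · exact exists_eq_of_koszul_cycle a ha (mul_left_cancel₀ h4 (by linear_combination e₁))
      (mul_left_cancel₀ h4 (by linear_combination e₂))
      (mul_left_cancel₀ h4 (by linear_combination e₃))
  · rintro ⟨w, -, rfl⟩
    simp only [Matrix.cons_val]
    refine ⟨?_, ?_, ?_, ?_⟩ <;> ring
  · rw [homogeneousSubmodule_one_eq_span_X, finrank_span_eq_card (linearIndependent_X (Fin 4) k),
      Fintype.card_fin]
end
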